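/- Let n ≥ 4 and let p : Fin n → EuclideanSpace ℝ (Fin 3) be such that the linear span of the set of difference vectors { p j − p i : i ≠ j } is all of ℝ³. Let C be the unit-weight coboundary matrix of the complete graph on Fin n (rows indexed by pairs (i,j) with i < j, row of (i,j) having entries −(p j a − p i a) at columns (i,a), (p j a − p i a) at columns (j,a), 0 elsewhere). Then C has rank 3·(n − 2); equivalently, the harmonic space of the complete graph has dimension exactly 6, so the kernel of the sheaf Laplacian CᵀC is 6-dimensional. -/

import Mathlib

open scoped RealInnerProductSpace

/-- The harmonic space (global section space of the anisotropic sheaf / kernel of the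
ANM Hessian) of a simple graph `G` with positions `p`. -/
def Harm {V : Type*} (G : SimpleGraph V) (p : V → EuclideanSpace ℝ (Fin 3)) :
    Submodule ℝ (V → EuclideanSpace ℝ (Fin 3)) where
  carrier := {x | ∀ ⦃i j : V⦄, G.Adj i j → ⟪p j - p i, x j - x i⟫ = 0}
  add_mem' := by
    intro x y hx hy i j hij
    have h : (x + y) j - (x + y) i = (x j - x i) + (y j - y i) := by
      simp only [Pi.add_apply]; abel
    rw [h, inner_add_right, hx hij, hy hij, add_zero]
  zero_mem' := by
    intro i j hij
    simp
  smul_mem' := by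
    intro c x hx i j hij
    have h : (c • x) j - (c • x) i = c • (x j - x i) := by
      simp only [Pi.smul_apply, smul_sub]
    rw [h, inner_smul_right, hx hij, mul_zero]

open Matrix

/- ### Auxiliary definitions and lemmas -/

noncomputable def toE3 : (Fin 3 → ℝ) ≃ₗ[ℝ] EuclideanSpace ℝ (Fin 3) :=
  (WithLp.linearEquiv 2 ℝ (Fin 3 → ℝ)).symm

@[simp] lemma toE3_apply (w : Fin 3 → ℝ) (a : Fin 3) : toE3 w a = w a := rfl

lemma E3_ext {u v : EuclideanSpace ℝ (Fin 3)} (h : ∀ a, u a = v a) : u = v := by ext a; exact h a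

lemma inner_E3 (u v : EuclideanSpace ℝ (Fin 3)) : ⟪u, v⟫ = ∑ a, u a * v a := by
  simp [PiLp.inner_apply, RCLike.inner_apply, conj_trivial]
  exact Finset.sum_congr rfl fun _ _ => mul_comm _ _

lemma skew_is_cross (A : EuclideanSpace ℝ (Fin 3) →ₗ[ℝ] EuclideanSpace ℝ (Fin 3))
    (h : ∀ u v : EuclideanSpace ℝ (Fin 3), ⟪A u, v⟫ = -⟪u, A v⟫) :
    ∃ ω : Fin 3 → ℝ, ∀ v : EuclideanSpace ℝ (Fin 3), ∀ a : Fin 3,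
      A v a = crossProduct ω (fun b => v b) a := by
  set eb : Fin 3 → EuclideanSpace ℝ (Fin 3) := fun b => EuclideanSpace.single b 1 with heb
  set M : Fin 3 → Fin 3 → ℝ := fun a b => A (eb b) a with hMdef
  have hM : ∀ a b, M a b = - M b a := by
    intro a b
    have := h (eb b) (eb a)
    rw [inner_E3, inner_E3] at this
    simpa [heb, EuclideanSpace.single_apply, Fin.sum_univ_three, hMdef,
      apply_ite, mul_comm] using this
  have hMaa : ∀ a, M a a = 0 := fun a => by have := hM a a; linarith
  refine ⟨![M 2 1, M 0 2, M 1 0], ?_⟩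
  intro v a
  have hv : v = v 0 • eb 0 + v 1 • eb 1 + v 2 • eb 2 := by
    refine E3_ext fun a => ?_
    fin_cases a <;>
      simp [heb, EuclideanSpace.single_apply, PiLp.add_apply, PiLp.smul_apply]
  have hAv : A v a = v 0 * M a 0 + v 1 * M a 1 + v 2 * M a 2 := by
    conv_lhs => rw [hv]
    simp [map_add, _root_.map_smul, PiLp.add_apply, PiLp.smul_apply, hMdef, smul_eq_mul]
  rw [hAv, cross_apply]
  fin_cases a
  · simp [hMaa]; linear_combination v 1 * hM 0 1
  · simp [hMaa]; linear_combination v 2 * hM 1 2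
  · simp [hMaa]; linear_combination v 0 * hM 2 0

lemma harm_structure {n : ℕ} (hn : 0 < n) (p x : Fin n → EuclideanSpace ℝ (Fin 3))
    (hspan : Submodule.span ℝ
      {v : EuclideanSpace ℝ (Fin 3) | ∃ i j : Fin n, i ≠ j ∧ v = p j - p i} = ⊤)
    (hx : ∀ i j : Fin n, ⟪p j - p i, x j - x i⟫ = 0) :
    ∃ (ω : Fin 3 → ℝ) (t : EuclideanSpace ℝ (Fin 3)),
      ∀ i, x i = toE3 (crossProduct ω (fun a => p i a)) + t := by
  set D : Set (EuclideanSpace ℝ (Fin 3)) :=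
    {v | ∃ i j : Fin n, i ≠ j ∧ v = p j - p i} with hD
  have hsym : ∀ a b : Fin n, ⟪p a, x b⟫ + ⟪p b, x a⟫ = ⟪p a, x a⟫ + ⟪p b, x b⟫ := by
    intro a b
    have h := hx a b
    simp only [inner_sub_left, inner_sub_right] at h
    linarith
  have claim : ∀ i j k l : Fin n,
      ⟪p j - p i, x l - x k⟫ = -⟪p l - p k, x j - x i⟫ := by
    intro i j k l
    simp only [inner_sub_left, inner_sub_right]
    linarith [hsym j l, hsym j k, hsym i l, hsym i k]
  obtain ⟨s, hsub, hspan2, hli⟩ := exists_linearIndependent ℝ D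
  have hs : Submodule.span ℝ s = ⊤ := by rw [hspan2, hspan]
  set B : Module.Basis s ℝ (EuclideanSpace ℝ (Fin 3)) :=
    Module.Basis.mk hli (by rw [Subtype.range_val]; exact hs.ge) with hB
  choose I J hne hval using fun v : s => hsub v.2
  set A : EuclideanSpace ℝ (Fin 3) →ₗ[ℝ] EuclideanSpace ℝ (Fin 3) :=
    B.constr ℝ (fun v => x (J v) - x (I v)) with hAdef
  have hbasis : ∀ v : s, A v.1 = x (J v) - x (I v) := by
    intro v
    have h1 : A (B v) = x (J v) - x (I v) := B.constr_basis ℝ _ v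
    rwa [show B v = v.1 from by rw [hB, Module.Basis.mk_apply]] at h1
  have memspan : ∀ u : EuclideanSpace ℝ (Fin 3), u ∈ Submodule.span ℝ s := by
    intro u; rw [hs]; trivial
  have memspanD : ∀ u : EuclideanSpace ℝ (Fin 3), u ∈ Submodule.span ℝ D := by
    intro u; rw [hspan]; trivial
  have hA1 : ∀ (u : EuclideanSpace ℝ (Fin 3)) (k l : Fin n),
      ⟪A u, p l - p k⟫ = -⟪u, x l - x k⟫ := by
    intro u k l
    induction memspan u using Submodule.span_induction with
    | mem v hv =>
      calc ⟪A v, p l - p k⟫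
          = ⟪x (J ⟨v, hv⟩) - x (I ⟨v, hv⟩), p l - p k⟫ := by rw [hbasis ⟨v, hv⟩]
        _ = -⟪p (J ⟨v, hv⟩) - p (I ⟨v, hv⟩), x l - x k⟫ := by
            rw [real_inner_comm, claim]
        _ = -⟪v, x l - x k⟫ := by rw [← hval ⟨v, hv⟩]
    | zero => simp
    | add u w hu hw ihu ihw => simp only [map_add, inner_add_left, ihu, ihw]; ring
    | smul c u hu ihu => simp only [_root_.map_smul, inner_smul_left, ihu, conj_trivial]; ring
  have hA : ∀ i j : Fin n, A (p j - p i) = x j - x i := by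
    intro i j
    have key : ∀ w : EuclideanSpace ℝ (Fin 3),
        ⟪A (p j - p i) - (x j - x i), w⟫ = 0 := by
      intro w
      induction memspanD w using Submodule.span_induction with
      | mem v hv =>
        obtain ⟨k, l, hkl, rfl⟩ := hv
        rw [inner_sub_left, hA1, claim, real_inner_comm]; ring
      | zero => simp
      | add u w hu hw ihu ihw => simp only [inner_add_right, ihu, ihw]; ring
      | smul c u hu ihu => simp only [inner_smul_right, ihu]; ring
    have h0 := key (A (p j - p i) - (x j - x i))
    rw [inner_self_eq_zero] at h0
    exact sub_eq_zero.mp h0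
  have hskew : ∀ u v : EuclideanSpace ℝ (Fin 3), ⟪A u, v⟫ = -⟪u, A v⟫ := by
    intro u v
    induction memspanD v using Submodule.span_induction with
    | mem v hv =>
      obtain ⟨k, l, hkl, rfl⟩ := hv
      rw [hA1, hA]
    | zero => simp
    | add u w hu hw ihu ihw => simp only [map_add, inner_add_right, ihu, ihw]; ring
    | smul c u hu ihu =>
      simp only [_root_.map_smul, inner_smul_right, ihu, conj_trivial]; ring
  obtain ⟨ω, hω⟩ := skew_is_cross A hskew
  refine ⟨ω, x ⟨0, hn⟩ - A (p ⟨0, hn⟩), fun i => ?_⟩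
  have h5 : A (p i) - A (p ⟨0, hn⟩) = x i - x ⟨0, hn⟩ := by
    rw [← map_sub]; exact hA ⟨0, hn⟩ i
  have h6 : toE3 (crossProduct ω (fun a => p i a)) = A (p i) :=
    E3_ext fun a => (hω (p i) a).symm
  have h7 : x i = A (p i) - A (p ⟨0, hn⟩) + x ⟨0, hn⟩ := by rw [h5]; abel
  rw [h6, h7]; abel

noncomputable def Fmap {n : ℕ} (p : Fin n → EuclideanSpace ℝ (Fin 3)) :
    ((Fin 3 → ℝ) × EuclideanSpace ℝ (Fin 3)) →ₗ[ℝ] (Fin n → EuclideanSpace ℝ (Fin 3)) where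
  toFun ωt := fun i => toE3 (crossProduct ωt.1 (fun a => p i a)) + ωt.2
  map_add' ωt ωt' := by
    funext i
    simp only [Pi.add_apply, Prod.fst_add, Prod.snd_add]
    rw [show crossProduct (ωt.1 + ωt'.1) = crossProduct ωt.1 + crossProduct ωt'.1 from
      map_add _ _ _]
    simp only [LinearMap.add_apply, map_add]
    abel
  map_smul' c ωt := by
    funext i
    simp only [Pi.smul_apply, RingHom.id_apply, Prod.smul_fst, Prod.smul_snd]
    rw [show crossProduct (c • ωt.1) = c • crossProduct ωt.1 from map_smul _ _ _]
    simp only [LinearMap.smul_apply, _root_.map_smul, smul_add]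

lemma Fmap_injective {n : ℕ} (hn : 0 < n) (p : Fin n → EuclideanSpace ℝ (Fin 3))
    (hspan : Submodule.span ℝ
      {v : EuclideanSpace ℝ (Fin 3) | ∃ i j : Fin n, i ≠ j ∧ v = p j - p i} = ⊤) :
    Function.Injective (Fmap p) := by
  rw [← LinearMap.ker_eq_bot, LinearMap.ker_eq_bot']
  rintro ⟨ω, t⟩ h
  have h' : ∀ i, toE3 (crossProduct ω (fun a => p i a)) + t = 0 := fun i => congrFun h i
  have hc : ∀ v : EuclideanSpace ℝ (Fin 3), crossProduct ω (fun a => v a) = 0 := by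
    intro v
    have hv : v ∈ Submodule.span ℝ
        {v : EuclideanSpace ℝ (Fin 3) | ∃ i j : Fin n, i ≠ j ∧ v = p j - p i} := by
      rw [hspan]; trivial
    induction hv using Submodule.span_induction with
    | mem v hv =>
      obtain ⟨i, j, hij, rfl⟩ := hv
      have h1 : toE3 (crossProduct ω (fun a => p j a)) =
          toE3 (crossProduct ω (fun a => p i a)) := by
        have := (h' j).trans (h' i).symm
        exact add_right_cancel this
      have h2 : crossProduct ω (fun a => p j a) = crossProduct ω (fun a => p i a) :=
        toE3.injective h1
      have h3 : (fun a => (p j - p i) a) = (fun a => p j a) - (fun a => p i a) := rfl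
      rw [h3, map_sub, h2, sub_self]
    | zero => rw [show (fun a => (0 : EuclideanSpace ℝ (Fin 3)) a) = (0 : Fin 3 → ℝ) from rfl,
        map_zero]
    | add u w hu hw ihu ihw =>
      rw [show (fun a => (u + w) a) = (fun a => u a) + (fun a => w a) from rfl, map_add,
        ihu, ihw, add_zero]
    | smul c u hu ihu =>
      rw [show (fun a => (c • u) a) = c • (fun a => u a) from rfl, _root_.map_smul, ihu,
        smul_zero]
  have hω : ω = 0 := by
    funext a
    fin_cases a
    · have := congrFun (hc (toE3 (Pi.single 1 1))) 2
      simpa [cross_apply, Pi.single_apply] using this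
    · have := congrFun (hc (toE3 (Pi.single 2 1))) 0
      simpa [cross_apply, Pi.single_apply] using this
    · have := congrFun (hc (toE3 (Pi.single 0 1))) 1
      simpa [cross_apply, Pi.single_apply] using this
  have ht : t = 0 := by
    have := h' ⟨0, hn⟩
    rw [hω] at this
    simpa using this
  rw [Prod.mk.injEq]
  exact ⟨hω, ht⟩

lemma Fmap_range {n : ℕ} (hn : 0 < n) (p : Fin n → EuclideanSpace ℝ (Fin 3))
    (hspan : Submodule.span ℝ
      {v : EuclideanSpace ℝ (Fin 3) | ∃ i j : Fin n, i ≠ j ∧ v = p j - p i} = ⊤) :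
    LinearMap.range (Fmap p) = Harm (⊤ : SimpleGraph (Fin n)) p := by
  apply le_antisymm
  · rintro x ⟨⟨ω, t⟩, rfl⟩
    intro i j hij
    have h1 : Fmap p (ω, t) j - Fmap p (ω, t) i =
        toE3 (crossProduct ω ((fun a => p j a) - (fun a => p i a))) := by
      show toE3 (crossProduct ω (fun a => p j a)) + t
            - (toE3 (crossProduct ω (fun a => p i a)) + t) = _
      rw [map_sub, map_sub]
      abel
    rw [h1, inner_E3]
    have h2 : ∀ a, (p j - p i) a = ((fun a => p j a) - (fun a => p i a)) a := fun a => rfl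
    calc (∑ a, (p j - p i) a * toE3 (crossProduct ω ((fun a => p j a) - (fun a => p i a))) a)
        = ((fun a => p j a) - (fun a => p i a)) ⬝ᵥ
            crossProduct ω ((fun a => p j a) - (fun a => p i a)) := by
          refine Finset.sum_congr rfl fun a _ => by rw [h2]; rfl
      _ = ω ⬝ᵥ crossProduct ((fun a => p j a) - (fun a => p i a))
            ((fun a => p j a) - (fun a => p i a)) := triple_product_permutation _ _ _
      _ = 0 := by rw [cross_self, dotProduct_zero]
  · intro x hx
    have hx' : ∀ i j : Fin n, ⟪p j - p i, x j - x i⟫ = 0 := by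
      intro i j
      by_cases hij : i = j
      · subst hij; simp
      · exact hx (by simpa using hij)
    obtain ⟨ω, t, hωt⟩ := harm_structure hn p x hspan hx'
    exact ⟨(ω, t), funext fun i => (hωt i).symm⟩

@[simp] lemma E3_sub_apply (u v : EuclideanSpace ℝ (Fin 3)) (a : Fin 3) :
    (u - v) a = u a - v a := rfl

lemma harm_finrank {n : ℕ} (hn : 0 < n) (p : Fin n → EuclideanSpace ℝ (Fin 3))
    (hspan : Submodule.span ℝ
      {v : EuclideanSpace ℝ (Fin 3) | ∃ i j : Fin n, i ≠ j ∧ v = p j - p i} = ⊤) :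
    Module.finrank ℝ (Harm (⊤ : SimpleGraph (Fin n)) p) = 6 := by
  rw [← Fmap_range hn p hspan,
    LinearMap.finrank_range_of_inj (Fmap_injective hn p hspan),
    Module.finrank_prod, finrank_euclideanSpace_fin]
  norm_num [Module.finrank_pi]

/-- For `n ≥ 4` points whose difference vectors span `ℝ³`, the unit-weight coboundary
matrix of the complete graph has rank `3(n − 2)`; equivalently the harmonic space of the
complete graph, i.e. the kernel of the sheaf Laplacian `CᵀC`, has dimension exactly `6`. -/
theorem complete_graph_rank_and_harm_dim
    {n : ℕ} (hn : 4 ≤ n) (p : Fin n → EuclideanSpace ℝ (Fin 3))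
    (hspan : Submodule.span ℝ
      {v : EuclideanSpace ℝ (Fin 3) | ∃ i j : Fin n, i ≠ j ∧ v = p j - p i} = ⊤)
    (C : Matrix {e : Fin n × Fin n // e.1 < e.2} (Fin n × Fin 3) ℝ)
    (hC : ∀ (e : {e : Fin n × Fin n // e.1 < e.2}) (k : Fin n) (a : Fin 3),
      C e (k, a) =
        if k = e.1.1 then -(p e.1.2 a - p e.1.1 a)
        else if k = e.1.2 then p e.1.2 a - p e.1.1 a
        else 0) :
    C.rank = 3 * (n - 2) ∧
    Module.finrank ℝ (Harm (⊤ : SimpleGraph (Fin n)) p) = 6 ∧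
    Module.finrank ℝ (LinearMap.ker (Cᵀ * C).mulVecLin) = 6 := by
  have hn0 : 0 < n := by omega
  set E2 : (Fin n × Fin 3 → ℝ) ≃ₗ[ℝ] (Fin n → EuclideanSpace ℝ (Fin 3)) :=
    (LinearEquiv.curry ℝ ℝ (Fin n) (Fin 3)).trans
      (LinearEquiv.piCongrRight fun _ => toE3) with hE2
  have hrow : ∀ (y : Fin n × Fin 3 → ℝ) (e : {e : Fin n × Fin n // e.1 < e.2}),
      C.mulVecLin y e = ∑ a, (p e.1.2 a - p e.1.1 a) * (y (e.1.2, a) - y (e.1.1, a)) := by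
    intro y e
    have hne : e.1.1 ≠ e.1.2 := ne_of_lt e.2
    have hne' : e.1.2 ≠ e.1.1 := (ne_of_lt e.2).symm
    rw [Matrix.mulVecLin_apply]
    show (∑ u : Fin n × Fin 3, C e u * y u) = _
    rw [Fintype.sum_prod_type, Finset.sum_comm]
    refine Finset.sum_congr rfl fun a _ => ?_
    have step : ∀ k : Fin n, C e (k, a) * y (k, a) =
        (if k = e.1.1 then -(p e.1.2 a - p e.1.1 a) * y (e.1.1, a) else 0)
        + (if k = e.1.2 then (p e.1.2 a - p e.1.1 a) * y (e.1.2, a) else 0) := by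
      intro k
      rw [hC]
      by_cases h1 : k = e.1.1
      · subst h1; simp [hne]
      · by_cases h2 : k = e.1.2
        · subst h2; simp [h1]
        · simp [h1, h2]
    rw [Finset.sum_congr rfl fun k _ => step k, Finset.sum_add_distrib,
      Finset.sum_ite_eq' Finset.univ e.1.1, Finset.sum_ite_eq' Finset.univ e.1.2]
    simp only [Finset.mem_univ, if_true]
    ring
  have hsymm : ∀ (x : Fin n → EuclideanSpace ℝ (Fin 3)) (k : Fin n) (a : Fin 3),
      (E2.symm x) (k, a) = x k a := fun _ _ _ => rfl
  have hker : Submodule.map (E2 : (Fin n × Fin 3 → ℝ) →ₗ[ℝ] _)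
      (LinearMap.ker C.mulVecLin) = Harm (⊤ : SimpleGraph (Fin n)) p := by
    ext x
    rw [Submodule.mem_map_equiv, LinearMap.mem_ker]
    constructor
    · intro h i j hij
      replace hij : i ≠ j := by simpa using hij
      have key : ∀ (i j : Fin n) (h' : i < j), ⟪p j - p i, x j - x i⟫ = 0 := by
        intro i j hlt
        have h0 := congrFun h (⟨(i, j), hlt⟩ : {e : Fin n × Fin n // e.1 < e.2})
        rw [hrow] at h0
        rw [inner_E3]
        simpa [hsymm, E3_sub_apply] using h0
      rcases lt_or_gt_of_ne hij with h' | h'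
      · exact key i j h'
      · have h2 := key j i h'
        rw [show p j - p i = -(p i - p j) by abel, show x j - x i = -(x i - x j) by abel,
          inner_neg_neg]
        exact h2
    · intro h
      funext e
      rw [hrow]
      have h2 := h (show (⊤ : SimpleGraph (Fin n)).Adj e.1.1 e.1.2 by
        simpa using ne_of_lt e.2)
      rw [inner_E3] at h2
      simpa [hsymm, E3_sub_apply] using h2
  have hharm : Module.finrank ℝ (Harm (⊤ : SimpleGraph (Fin n)) p) = 6 :=
    harm_finrank hn0 p hspan
  have hfin6 : Module.finrank ℝ (LinearMap.ker C.mulVecLin) = 6 := by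
    rw [← LinearEquiv.finrank_map_eq E2 (LinearMap.ker C.mulVecLin), hker, hharm]
  refine ⟨?_, hharm, ?_⟩
  · have h1 := LinearMap.finrank_range_add_finrank_ker C.mulVecLin
    rw [hfin6] at h1
    have h2 : Module.finrank ℝ (Fin n × Fin 3 → ℝ) = n * 3 := by
      simp [Module.finrank_pi]
    rw [h2] at h1
    have h3 : C.rank = Module.finrank ℝ (LinearMap.range C.mulVecLin) := rfl
    omega
  · rw [Matrix.ker_mulVecLin_transpose_mul_self]
    exact hfin6
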